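/- arXiv:2604.11260 — 4 statements merged into one kernel-verified Lean document; each statement's English description precedes it below -/
import Mathlib

section
/- Let (Γ, μ) be a measure space, τ_ep, τ_res > 0, and let β : ℝ → ℝ be Lipschitz continuous with constant L_β. Then there exists a constant C, depending only on τ_ep, τ_res and L_β, such that for all v₁, v₂, w₁, w₂ ∈ L²(μ): ∫_Γ (f(v₁(x),w₁(x)) − f(v₂(x),w₂(x)))·(w₁(x) − w₂(x)) dμ(x) ≤ C·(‖v₁ − v₂‖²_{L²(μ)} + ‖w₁ − w₂‖²_{L²(μ)}). -/
open MeasureTheory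

/-- The electroporation nonlinearity
`f(v,w) = max((β(v) − w)/τ_ep, (β(v) − w)/τ_res)`. -/
noncomputable def epF (τep τres : ℝ) (β : ℝ → ℝ) (v w : ℝ) : ℝ :=
  max ((β v - w) / τep) ((β v - w) / τres)

lemma epF_key (τep τres Lβ : ℝ) (hep : 0 < τep) (hres : 0 < τres) (hL : 0 ≤ Lβ)
    (β : ℝ → ℝ) (hβ : ∀ x y : ℝ, |β x - β y| ≤ Lβ * |x - y|) (v₁ v₂ w₁ w₂ : ℝ) :
    (epF τep τres β v₁ w₁ - epF τep τres β v₂ w₂) * (w₁ - w₂)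
      ≤ max τep⁻¹ τres⁻¹ * (Lβ / 2 + 1) * ((v₁ - v₂) ^ 2 + (w₁ - w₂) ^ 2) := by
  set K := max τep⁻¹ τres⁻¹ with hKdef
  have hK : 0 ≤ K := le_trans (le_of_lt (inv_pos.2 hep)) (le_max_left _ _)
  set c₁ := β v₁ - w₁
  set c₂ := β v₂ - w₂
  have hc : |c₁ - c₂| ≤ Lβ * |v₁ - v₂| + |w₁ - w₂| := by
    have : c₁ - c₂ = (β v₁ - β v₂) - (w₁ - w₂) := by ring
    rw [this]
    refine le_trans (abs_sub _ _) ?_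
    exact add_le_add (hβ v₁ v₂) le_rfl
  have hf : |epF τep τres β v₁ w₁ - epF τep τres β v₂ w₂| ≤ K * |c₁ - c₂| := by
    refine le_trans (abs_max_sub_max_le_max _ _ _ _) ?_
    have h1 : |c₁ / τep - c₂ / τep| = |c₁ - c₂| * τep⁻¹ := by
      rw [div_sub_div_same, abs_div, abs_of_pos hep, div_eq_mul_inv]
    have h2 : |c₁ / τres - c₂ / τres| = |c₁ - c₂| * τres⁻¹ := by
      rw [div_sub_div_same, abs_div, abs_of_pos hres, div_eq_mul_inv]
    rw [h1, h2, mul_comm K]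
    exact max_le (mul_le_mul_of_nonneg_left (le_max_left _ _) (abs_nonneg _))
      (mul_le_mul_of_nonneg_left (le_max_right _ _) (abs_nonneg _))
  have hstep : (epF τep τres β v₁ w₁ - epF τep τres β v₂ w₂) * (w₁ - w₂)
      ≤ K * (Lβ * |v₁ - v₂| + |w₁ - w₂|) * |w₁ - w₂| := by
    calc _ ≤ |epF τep τres β v₁ w₁ - epF τep τres β v₂ w₂| * |w₁ - w₂| := by
            rw [← abs_mul]; exact le_abs_self _
      _ ≤ (K * |c₁ - c₂|) * |w₁ - w₂| := mul_le_mul_of_nonneg_right hf (abs_nonneg _)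
      _ ≤ _ := mul_le_mul_of_nonneg_right
            (mul_le_mul_of_nonneg_left hc hK) (abs_nonneg _)
  refine le_trans hstep ?_
  have hA : |v₁ - v₂| ^ 2 = (v₁ - v₂) ^ 2 := sq_abs _
  have hB : |w₁ - w₂| ^ 2 = (w₁ - w₂) ^ 2 := sq_abs _
  rw [← hA, ← hB]
  nlinarith [mul_nonneg (mul_nonneg hK hL) (sq_nonneg (|v₁ - v₂| - |w₁ - w₂|)),
    mul_nonneg hK (sq_nonneg (|v₁ - v₂|))]

lemma Lp_sq_integrable {Γ : Type*} [MeasurableSpace Γ] {μ : Measure Γ} (a : Lp ℝ 2 μ) :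
    Integrable (fun x => (a x) ^ 2) μ := by
  have := L2.integrable_inner (𝕜 := ℝ) a a
  simpa [RCLike.inner_apply, sq] using this

lemma Lp_integral_sq {Γ : Type*} [MeasurableSpace Γ] {μ : Measure Γ} (a : Lp ℝ 2 μ) :
    ∫ x, (a x) ^ 2 ∂μ = ‖a‖ ^ 2 := by
  have h := L2.inner_def (𝕜 := ℝ) a a
  rw [real_inner_self_eq_norm_sq] at h
  rw [h]
  congr 1; ext x
  simp [RCLike.inner_apply, sq]

/-- Lipschitz-type monotonicity estimate for the electroporation nonlinearity `f`
tested against `w₁ - w₂` in `L²(μ)`. -/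
theorem epF_L2_monotonicity {Γ : Type*} [MeasurableSpace Γ] (μ : Measure Γ)
    (τep τres Lβ : ℝ) (hep : 0 < τep) (hres : 0 < τres)
    (β : ℝ → ℝ) (hβ : ∀ x y : ℝ, |β x - β y| ≤ Lβ * |x - y|) :
    ∃ C : ℝ, ∀ v₁ v₂ w₁ w₂ : Lp ℝ 2 μ,
      ∫ x, (epF τep τres β (v₁ x) (w₁ x) - epF τep τres β (v₂ x) (w₂ x))
            * (w₁ x - w₂ x) ∂μ
        ≤ C * (‖v₁ - v₂‖ ^ 2 + ‖w₁ - w₂‖ ^ 2) := by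
  have hL : 0 ≤ Lβ := by
    have h01 := hβ 0 1
    have h0 : (0:ℝ) ≤ |β 0 - β 1| := abs_nonneg _
    simp only [zero_sub, abs_neg, abs_one, mul_one] at h01
    linarith
  set K := max τep⁻¹ τres⁻¹ with hKdef
  have hK : 0 ≤ K := le_trans (le_of_lt (inv_pos.2 hep)) (le_max_left _ _)
  set C := K * (Lβ / 2 + 1) with hCdef
  have hC : 0 ≤ C := mul_nonneg hK (by linarith)
  refine ⟨C, fun v₁ v₂ w₁ w₂ => ?_⟩
  set a := v₁ - v₂ with ha
  set b := w₁ - w₂ with hb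
  have hRHS : 0 ≤ C * (‖a‖ ^ 2 + ‖b‖ ^ 2) :=
    mul_nonneg hC (by positivity)
  set g : Γ → ℝ := fun x =>
    (epF τep τres β (v₁ x) (w₁ x) - epF τep τres β (v₂ x) (w₂ x)) * (w₁ x - w₂ x) with hgdef
  have hbound : ∀ᵐ x ∂μ, g x ≤ C * ((a x) ^ 2 + (b x) ^ 2) := by
    filter_upwards [Lp.coeFn_sub v₁ v₂, Lp.coeFn_sub w₁ w₂] with x hax hbx
    rw [hgdef]
    simp only [ha, hb, hax, hbx, Pi.sub_apply]
    exact epF_key τep τres Lβ hep hres hL β hβ _ _ _ _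
  have hh : Integrable (fun x => C * ((a x) ^ 2 + (b x) ^ 2)) μ :=
    ((Lp_sq_integrable a).add (Lp_sq_integrable b)).const_mul C
  by_cases hg : Integrable g μ
  · calc ∫ x, g x ∂μ ≤ ∫ x, C * ((a x) ^ 2 + (b x) ^ 2) ∂μ :=
          integral_mono_ae hg hh hbound
      _ = C * (∫ x, (a x) ^ 2 ∂μ + ∫ x, (b x) ^ 2 ∂μ) := by
          rw [integral_const_mul, integral_add (Lp_sq_integrable a) (Lp_sq_integrable b)]
      _ = C * (‖a‖ ^ 2 + ‖b‖ ^ 2) := by rw [Lp_integral_sq, Lp_integral_sq]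
  · rw [integral_undef hg]
    exact hRHS
end

section
/- Let τ_ep, τ_res > 0 and let β : ℝ → ℝ satisfy 0 ≤ β(ξ) ≤ 1 for all ξ. Let v : [0,∞) → ℝ be any function and let w : [0,∞) → ℝ be differentiable with w'(t) = f(v(t), w(t)) for every t ≥ 0. If 0 ≤ w(0) ≤ 1, then 0 ≤ w(t) ≤ 1 for all t ≥ 0. -/
/-- Invariance of the unit interval for the degree of porosity `w` solving
`w' = f(v, w)`. -/
theorem porosity_invariance (τep τres : ℝ) (hep : 0 < τep) (hres : 0 < τres)
    (β : ℝ → ℝ) (hβ : ∀ ξ : ℝ, 0 ≤ β ξ ∧ β ξ ≤ 1)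
    (v w : ℝ → ℝ)
    (hw : ∀ t : ℝ, 0 ≤ t → HasDerivAt w (epF τep τres β (v t) (w t)) t)
    (h0 : 0 ≤ w 0 ∧ w 0 ≤ 1) :
    ∀ t : ℝ, 0 ≤ t → 0 ≤ w t ∧ w t ≤ 1 := by
  intro t ht
  have hcont : ContinuousOn w (Set.Icc 0 t) := fun x hx =>
    ((hw x hx.1).continuousAt).continuousWithinAt
  have htmem : t ∈ Set.Icc (0:ℝ) t := Set.right_mem_Icc.2 ht
  constructor
  · -- lower bound
    have key : ∀ ε : ℝ, 0 < ε → -w t ≤ 0 + ε := by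
      intro ε hε
      have := image_le_of_deriv_right_lt_deriv_boundary
        (f := fun x => -w x) (f' := fun x => -(epF τep τres β (v x) (w x)))
        (a := 0) (b := t)
        (hcont.neg)
        (fun x hx => ((hw x hx.1).neg).hasDerivWithinAt)
        (B := fun _ => 0 + ε) (B' := fun _ => 0)
        (show -w 0 ≤ 0 + ε by linarith [h0.1])
        (fun x => hasDerivAt_const x (0 + ε))
        (fun x hx heq => by
          have hwx : w x = -ε := by linarith
          have h1 : 0 < (β (v x) - w x) / τep := by
            apply div_pos _ hep
            have := (hβ (v x)).1
            rw [hwx]; linarith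
          have : 0 < epF τep τres β (v x) (w x) :=
            lt_of_lt_of_le h1 (le_max_left _ _)
          linarith)
        htmem
      simpa using this
    have : -w t ≤ 0 := le_of_forall_pos_le_add key
    linarith
  · -- upper bound
    have key : ∀ ε : ℝ, 0 < ε → w t ≤ 1 + ε := by
      intro ε hε
      exact image_le_of_deriv_right_lt_deriv_boundary
        (f := w) (f' := fun x => epF τep τres β (v x) (w x))
        (a := 0) (b := t)
        hcont
        (fun x hx => (hw x hx.1).hasDerivWithinAt)
        (B := fun _ => 1 + ε) (B' := fun _ => 0)
        (show w 0 ≤ 1 + ε by linarith [h0.2])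
        (fun x => hasDerivAt_const x (1 + ε))
        (fun x hx hwx => by
          have hb := (hβ (v x)).2
          have h1 : (β (v x) - w x) / τep < 0 := by
            apply div_neg_of_neg_of_pos _ hep
            rw [hwx]; linarith
          have h2 : (β (v x) - w x) / τres < 0 := by
            apply div_neg_of_neg_of_pos _ hres
            rw [hwx]; linarith
          exact max_lt h1 h2)
        htmem
    exact le_of_forall_pos_le_add key
end

section
/- Let (Γ, μ) be a finite measure space, S₀, S₁, c_m > 0, τ_ep, τ_res > 0, and let β : ℝ → ℝ be Lipschitz continuous. Then for all u₁, u₂, φ ∈ L⁴(μ) and w₁, w₂, ψ ∈ L²(μ), the real function s ↦ −(1/c_m)·∫_Γ (S₀ + S₁·(w₁ + s·w₂))·(u₁ + s·u₂)·φ dμ + ∫_Γ f(u₁ + s·u₂, w₁ + s·w₂)·ψ dμ is continuous on ℝ (hemicontinuity of the reaction part of the drift operator). -/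
/-!
On a bounded set of parameters `|s| ≤ R` both integrands are dominated, uniformly in `s`, by
integrable functions built from `|u₁| + R|u₂|` and `|w₁| + R|w₂|`: for the membrane term by
Hölder's inequality with exponents `(4, 4, 2)` and `(2, 2, 1)`, for the electroporation term
through the linear growth of `f`, inherited from the Lipschitz bound on `β`. Since both
integrands are continuous in `s` pointwise, dominated convergence gives continuity.
-/

open MeasureTheory
open scoped ENNReal NNReal

instance ENNReal.HolderTriple.instFourFourTwo : ENNReal.HolderTriple 4 4 2 where
  inv_add_inv_eq_inv := by
    rw [show (4 : ℝ≥0∞) = 2 * 2 by norm_num, ENNReal.mul_inv (by simp) (by simp), ← mul_add,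
      ENNReal.inv_two_add_inv_two, mul_one]

theorem abs_add_mul_le_of_abs_le {a b s R : ℝ} (hs : |s| ≤ R) : |a + s * b| ≤ |a| + R * |b| :=
  calc |a + s * b| ≤ |a| + |s| * |b| := by simpa only [abs_mul] using abs_add_le a (s * b)
    _ ≤ |a| + R * |b| := by gcongr

theorem abs_epF_le (τep τres : ℝ) {β : ℝ → ℝ} {K : ℝ≥0} (hβ : LipschitzWith K β) (v w : ℝ) :
    |epF τep τres β v w| ≤ (|τep|⁻¹ + |τres|⁻¹) * (|β 0| + K * |v| + |w|) := by
  have h_growth : |β v - w| ≤ |β 0| + K * |v| + |w| := by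
    have hβv : |β v - β 0| ≤ K * |v| := by simpa [Real.dist_eq] using hβ.dist_le_mul v 0
    linarith [abs_sub (β v) w, abs_sub_abs_le_abs_sub (β v) (β 0)]
  calc |epF τep τres β v w| ≤ max |(β v - w) / τep| |(β v - w) / τres| := abs_max_le_max_abs_abs
    _ ≤ |(β v - w) / τep| + |(β v - w) / τres| := max_le_add_of_nonneg (abs_nonneg _) (abs_nonneg _)
    _ = (|τep|⁻¹ + |τres|⁻¹) * |β v - w| := by rw [abs_div, abs_div]; ring
    _ ≤ _ := by gcongr

theorem continuous_epF (τep τres : ℝ) {β : ℝ → ℝ} (hβ : Continuous β) :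
    Continuous fun p : ℝ × ℝ => epF τep τres β p.1 p.2 := by
  unfold epF; fun_prop

section Integral

variable {α : Type*} [MeasurableSpace α] {μ : Measure α}

theorem MeasureTheory.MemLp.abs_add_const_mul_abs {p : ℝ≥0∞} {f g : α → ℝ} (hf : MemLp f p μ)
    (hg : MemLp g p μ) (R : ℝ) : MemLp (fun x => |f x| + R * |g x|) p μ :=
  hf.abs.add (hg.abs.const_mul R)

theorem continuous_integral_of_dominated_of_abs_le {G : Type*} [NormedAddCommGroup G]
    [NormedSpace ℝ G] {F : ℝ → α → G} (hF_meas : ∀ s, AEStronglyMeasurable (F s) μ)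
    (h_bound : ∀ R, ∃ bound : α → ℝ, Integrable bound μ ∧
      ∀ s, |s| ≤ R → ∀ᵐ a ∂μ, ‖F s a‖ ≤ bound a)
    (h_cont : ∀ᵐ a ∂μ, Continuous fun s => F s a) :
    Continuous fun s => ∫ a, F s a ∂μ := by
  refine continuous_iff_continuousAt.2 fun s₀ => ?_
  obtain ⟨bound, h_int, h_le⟩ := h_bound (|s₀| + 1)
  have h_near : ∀ᶠ s in nhds s₀, |s| ≤ |s₀| + 1 :=
    (continuous_abs.tendsto s₀).eventually (ge_mem_nhds (lt_add_one |s₀|))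
  exact continuousAt_of_dominated (.of_forall hF_meas) (h_near.mono h_le) h_int
    (h_cont.mono fun _ h => h.continuousAt)

variable [IsFiniteMeasure μ]

theorem continuous_integral_membrane (S₀ S₁ : ℝ) {u₁ u₂ φ w₁ w₂ : α → ℝ}
    (hu₁ : MemLp u₁ 4 μ) (hu₂ : MemLp u₂ 4 μ) (hφ : MemLp φ 4 μ)
    (hw₁ : MemLp w₁ 2 μ) (hw₂ : MemLp w₂ 2 μ) :
    Continuous fun s : ℝ =>
      ∫ x, (S₀ + S₁ * (w₁ x + s * w₂ x)) * (u₁ x + s * u₂ x) * φ x ∂μ := by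
  refine continuous_integral_of_dominated_of_abs_le (fun s => ?_) (fun R => ?_)
    (.of_forall fun x => by fun_prop)
  · exact ((aestronglyMeasurable_const.add ((hw₁.1.add (hw₂.1.const_mul s)).const_mul S₁)).mul
      (hu₁.1.add (hu₂.1.const_mul s))).mul hφ.1
  · refine ⟨fun x => (|S₀| + |S₁| * (|w₁ x| + R * |w₂ x|)) * ((|u₁ x| + R * |u₂ x|) * |φ x|),
      ?_, fun s hs => .of_forall fun x => ?_⟩
    · have hW := (hw₁.abs_add_const_mul_abs hw₂ R).const_mul |S₁|
      have hUφ := hφ.abs.mul' (r := 2) (hu₁.abs_add_const_mul_abs hu₂ R)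
      exact ((memLp_const |S₀|).add hW).integrable_mul hUφ
    · have hS : |S₀ + S₁ * (w₁ x + s * w₂ x)| ≤ |S₀| + |S₁| * (|w₁ x| + R * |w₂ x|) :=
        calc |S₀ + S₁ * (w₁ x + s * w₂ x)| ≤ |S₀| + |S₁| * |w₁ x + s * w₂ x| := by
              simpa only [abs_mul] using abs_add_le S₀ (S₁ * (w₁ x + s * w₂ x))
          _ ≤ |S₀| + |S₁| * (|w₁ x| + R * |w₂ x|) := by gcongr; exact abs_add_mul_le_of_abs_le hs
      rw [Real.norm_eq_abs, abs_mul, abs_mul, mul_assoc]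
      exact mul_le_mul hS (by gcongr; exact abs_add_mul_le_of_abs_le hs) (by positivity)
        ((abs_nonneg _).trans hS)

theorem continuous_integral_epF (τep τres : ℝ) {β : ℝ → ℝ} {K : ℝ≥0} (hβ : LipschitzWith K β)
    {u₁ u₂ w₁ w₂ ψ : α → ℝ} (hu₁ : MemLp u₁ 2 μ) (hu₂ : MemLp u₂ 2 μ) (hw₁ : MemLp w₁ 2 μ)
    (hw₂ : MemLp w₂ 2 μ) (hψ : MemLp ψ 2 μ) :
    Continuous fun s : ℝ =>
      ∫ x, epF τep τres β (u₁ x + s * u₂ x) (w₁ x + s * w₂ x) * ψ x ∂μ := by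
  have hF := continuous_epF τep τres hβ.continuous
  refine continuous_integral_of_dominated_of_abs_le (fun s => ?_) (fun R => ?_)
    (.of_forall fun x => ?_)
  · exact (hF.comp_aestronglyMeasurable ((hu₁.1.add (hu₂.1.const_mul s)).prodMk
      (hw₁.1.add (hw₂.1.const_mul s)))).mul hψ.1
  · refine ⟨fun x => (|τep|⁻¹ + |τres|⁻¹) *
      (|β 0| + K * (|u₁ x| + R * |u₂ x|) + (|w₁ x| + R * |w₂ x|)) * |ψ x|, ?_,
      fun s hs => .of_forall fun x => ?_⟩
    · exact ((((memLp_const |β 0|).add ((hu₁.abs_add_const_mul_abs hu₂ R).const_mul K)).add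
        (hw₁.abs_add_const_mul_abs hw₂ R)).const_mul _).integrable_mul hψ.abs
    · rw [Real.norm_eq_abs, abs_mul]
      refine mul_le_mul_of_nonneg_right ((abs_epF_le τep τres hβ _ _).trans ?_) (abs_nonneg _)
      gcongr <;> exact abs_add_mul_le_of_abs_le hs
  · exact (hF.comp (f := fun s => (u₁ x + s * u₂ x, w₁ x + s * w₂ x)) (by fun_prop)).mul
      continuous_const

end Integral

theorem reaction_hemicontinuity_general {Γ : Type*} [MeasurableSpace Γ]
    (μ : Measure Γ) [IsFiniteMeasure μ]
    (S₀ S₁ cm τep τres Lβ : ℝ)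
    (β : ℝ → ℝ) (hβ : ∀ x y : ℝ, |β x - β y| ≤ Lβ * |x - y|)
    (u₁ u₂ φ w₁ w₂ ψ : Γ → ℝ)
    (hu₁ : MemLp u₁ 4 μ) (hu₂ : MemLp u₂ 4 μ) (hφ : MemLp φ 4 μ)
    (hw₁ : MemLp w₁ 2 μ) (hw₂ : MemLp w₂ 2 μ) (hψ : MemLp ψ 2 μ) :
    Continuous (fun s : ℝ =>
      -(1 / cm) * ∫ x, (S₀ + S₁ * (w₁ x + s * w₂ x)) * (u₁ x + s * u₂ x) * φ x ∂μ
        + ∫ x, epF τep τres β (u₁ x + s * u₂ x) (w₁ x + s * w₂ x) * ψ x ∂μ) := by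
  have hβ_lip : LipschitzWith (Real.toNNReal Lβ) β := .of_dist_le' hβ
  have h_two_le_four : (2 : ℝ≥0∞) ≤ 4 := by norm_num
  exact ((continuous_integral_membrane S₀ S₁ hu₁ hu₂ hφ hw₁ hw₂).const_mul _).add
    (continuous_integral_epF τep τres hβ_lip (hu₁.mono_exponent h_two_le_four)
      (hu₂.mono_exponent h_two_le_four) hw₁ hw₂ hψ)

/-- Hemicontinuity of the reaction part of the drift operator of the
electroporation system. -/
theorem reaction_hemicontinuity {Γ : Type*} [MeasurableSpace Γ]
    (μ : Measure Γ) [IsFiniteMeasure μ]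
    (S₀ S₁ cm τep τres Lβ : ℝ)
    (hS₀ : 0 < S₀) (hS₁ : 0 < S₁) (hcm : 0 < cm)
    (hep : 0 < τep) (hres : 0 < τres)
    (β : ℝ → ℝ) (hβ : ∀ x y : ℝ, |β x - β y| ≤ Lβ * |x - y|)
    (u₁ u₂ φ w₁ w₂ ψ : Γ → ℝ)
    (hu₁ : MemLp u₁ 4 μ) (hu₂ : MemLp u₂ 4 μ) (hφ : MemLp φ 4 μ)
    (hw₁ : MemLp w₁ 2 μ) (hw₂ : MemLp w₂ 2 μ) (hψ : MemLp ψ 2 μ) :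
    Continuous (fun s : ℝ =>
      -(1 / cm) * ∫ x, (S₀ + S₁ * (w₁ x + s * w₂ x)) * (u₁ x + s * u₂ x) * φ x ∂μ
        + ∫ x, epF τep τres β (u₁ x + s * u₂ x) (w₁ x + s * w₂ x) * ψ x ∂μ) :=
  reaction_hemicontinuity_general μ S₀ S₁ cm τep τres Lβ β hβ u₁ u₂ φ w₁ w₂ ψ hu₁ hu₂ hφ hw₁ hw₂ hψ
end

section
/- Let (Γ, μ) be a measure space, S₀, S₁, c_m > 0, τ_ep, τ_res > 0, and let β : ℝ → ℝ be Lipschitz continuous with constant L_β. Then there exists a constant C, depending only on τ_ep, τ_res and L_β, such that for all u₁, u₂ ∈ L²(μ) ∩ L⁴(μ) and w₁, w₂ ∈ L²(μ) with 0 ≤ w₁ ≤ 1 μ-a.e.: −(1/c_m)·∫_Γ ((S₀ + S₁·w₁)·u₁ − (S₀ + S₁·w₂)·u₂)·(u₁ − u₂) dμ + ∫_Γ (f(u₁,w₁) − f(u₂,w₂))·(w₁ − w₂) dμ ≤ (S₁/c_m)·‖w₁ − w₂‖_{L²(μ)}·‖u₂‖_{L⁴(μ)}·‖u₁ − u₂‖_{L⁴(μ)}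 + C·(‖u₁ − u₂‖²_{L²(μ)} + ‖w₁ − w₂‖²_{L²(μ)}). -/
/-!
The membrane part of the integrand splits as
`(S₀ + S₁ w₁) (u₁ - u₂)² + S₁ (w₁ - w₂) u₂ (u₁ - u₂)`: the first summand is nonnegative since
`w₁ ≥ 0`, and the second is controlled by Hölder's inequality with exponents `2, 4, 4`.
The electroporation nonlinearity is Lipschitz in `(v, w)` with constants depending only on
`τ_ep`, `τ_res` and `L_β`, so Young's inequality bounds its product with `w₁ - w₂` pointwise by a
multiple of `(u₁ - u₂)² + (w₁ - w₂)²`, whose integral is `‖u₁ - u₂‖₂² + ‖w₁ - w₂‖₂²`.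
-/

open MeasureTheory
open scoped ENNReal

instance : ENNReal.HolderTriple 4 4 2 where
  inv_add_inv_eq_inv := by
    rw [← two_mul, show (4 : ℝ≥0∞) = 2 * 2 by norm_num, ENNReal.mul_inv (by simp) (by simp),
      ← mul_assoc, ENNReal.mul_inv_cancel (by simp) (by simp), one_mul]

theorem nonneg_of_abs_sub_le_mul_abs_sub {β : ℝ → ℝ} {L : ℝ}
    (hβ : ∀ x y : ℝ, |β x - β y| ≤ L * |x - y|) : 0 ≤ L := by
  simpa using (abs_nonneg _).trans (hβ 1 0)

theorem abs_max_div_sub_max_div_le (τ σ a b : ℝ) :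
    |max (a / τ) (a / σ) - max (b / τ) (b / σ)| ≤ max |τ|⁻¹ |σ|⁻¹ * |a - b| := by
  refine (abs_max_sub_max_le_max _ _ _ _).trans ?_
  rw [div_sub_div_same, div_sub_div_same, abs_div, abs_div, div_eq_inv_mul, div_eq_inv_mul]
  exact max_le (by gcongr; exact le_max_left _ _) (by gcongr; exact le_max_right _ _)

theorem abs_epF_sub_le {τep τres Lβ : ℝ} {β : ℝ → ℝ}
    (hβ : ∀ x y : ℝ, |β x - β y| ≤ Lβ * |x - y|) (v₁ v₂ w₁ w₂ : ℝ) :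
    |epF τep τres β v₁ w₁ - epF τep τres β v₂ w₂| ≤
      max |τep|⁻¹ |τres|⁻¹ * (Lβ * |v₁ - v₂| + |w₁ - w₂|) := by
  have hK : 0 ≤ max |τep|⁻¹ |τres|⁻¹ := le_max_of_le_left (by positivity)
  refine (abs_max_div_sub_max_div_le _ _ _ _).trans (mul_le_mul_of_nonneg_left ?_ hK)
  calc |β v₁ - w₁ - (β v₂ - w₂)| = |(β v₁ - β v₂) - (w₁ - w₂)| := by ring_nf
    _ ≤ |β v₁ - β v₂| + |w₁ - w₂| := abs_sub _ _
    _ ≤ Lβ * |v₁ - v₂| + |w₁ - w₂| := by gcongr; exact hβ v₁ v₂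

theorem epF_sub_mul_sub_le {τep τres Lβ : ℝ} {β : ℝ → ℝ}
    (hβ : ∀ x y : ℝ, |β x - β y| ≤ Lβ * |x - y|) (v₁ v₂ w₁ w₂ : ℝ) :
    (epF τep τres β v₁ w₁ - epF τep τres β v₂ w₂) * (w₁ - w₂) ≤
      max |τep|⁻¹ |τres|⁻¹ * (Lβ + 1) * ((v₁ - v₂) ^ 2 + (w₁ - w₂) ^ 2) := by
  have hLβ := nonneg_of_abs_sub_le_mul_abs_sub hβ
  set K := max |τep|⁻¹ |τres|⁻¹
  have hK : 0 ≤ K := le_max_of_le_left (by positivity)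
  have young : |v₁ - v₂| * |w₁ - w₂| ≤ (v₁ - v₂) ^ 2 + (w₁ - w₂) ^ 2 := by
    nlinarith [sq_nonneg (|v₁ - v₂| - |w₁ - w₂|), sq_abs (v₁ - v₂), sq_abs (w₁ - w₂)]
  calc (epF τep τres β v₁ w₁ - epF τep τres β v₂ w₂) * (w₁ - w₂)
      ≤ |epF τep τres β v₁ w₁ - epF τep τres β v₂ w₂| * |w₁ - w₂| := by
        rw [← abs_mul]; exact le_abs_self _
    _ ≤ K * (Lβ * |v₁ - v₂| + |w₁ - w₂|) * |w₁ - w₂| := by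
        gcongr; exact abs_epF_sub_le hβ _ _ _ _
    _ = K * (Lβ * (|v₁ - v₂| * |w₁ - w₂|) + (w₁ - w₂) ^ 2) := by rw [← sq_abs (w₁ - w₂)]; ring
    _ ≤ K * (Lβ * ((v₁ - v₂) ^ 2 + (w₁ - w₂) ^ 2) + ((v₁ - v₂) ^ 2 + (w₁ - w₂) ^ 2)) := by
        gcongr
        exact le_add_of_nonneg_left (sq_nonneg _)
    _ = K * (Lβ + 1) * ((v₁ - v₂) ^ 2 + (w₁ - w₂) ^ 2) := by ring

theorem neg_membrane_sub_mul_sub_le {S₀ S₁ u₁ u₂ w₁ w₂ : ℝ} (hS₀ : 0 ≤ S₀) (hS₁ : 0 ≤ S₁)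
    (hw₁ : 0 ≤ w₁) :
    -(((S₀ + S₁ * w₁) * u₁ - (S₀ + S₁ * w₂) * u₂) * (u₁ - u₂)) ≤
      S₁ * |(w₁ - w₂) * (u₂ * (u₁ - u₂))| := by
  have hsquare : 0 ≤ (S₀ + S₁ * w₁) * (u₁ - u₂) ^ 2 := by positivity
  have hcross := mul_le_mul_of_nonneg_left (neg_abs_le ((w₁ - w₂) * (u₂ * (u₁ - u₂)))) hS₁
  linear_combination hsquare + hcross

section
variable {Γ : Type*} [MeasurableSpace Γ] {μ : Measure Γ}

-- No integrability of `f` is needed: otherwise `∫ f = 0 ≤ ∫ g`.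
theorem integral_mono_ae_of_nonneg_right {f g : Γ → ℝ} (hg : Integrable g μ) (hg₀ : 0 ≤ᵐ[μ] g)
    (hfg : f ≤ᵐ[μ] g) : ∫ x, f x ∂μ ≤ ∫ x, g x ∂μ := by
  by_cases hf : Integrable f μ
  · exact integral_mono_ae hf hg hfg
  · exact (integral_undef hf).trans_le (integral_nonneg_of_ae hg₀)

theorem integral_sq_eq_sq_toReal_eLpNorm_two {f : Γ → ℝ} (hf : AEStronglyMeasurable f μ) :
    ∫ x, f x ^ 2 ∂μ = (eLpNorm f 2 μ).toReal ^ 2 := by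
  rw [toReal_eLpNorm hf, lpNorm_eq_integral_norm_rpow_toReal two_ne_zero ENNReal.ofNat_ne_top hf]
  simp only [ENNReal.toReal_ofNat, Real.norm_eq_abs, Real.rpow_two, sq_abs]
  exact (Real.rpow_inv_natCast_pow (integral_nonneg fun _ => sq_nonneg _) two_ne_zero).symm

theorem toReal_eLpNorm_mul_le {p q r : ℝ≥0∞} [ENNReal.HolderTriple p q r] {f g : Γ → ℝ}
    (hf : MemLp f p μ) (hg : MemLp g q μ) :
    (eLpNorm (f * g) r μ).toReal ≤ (eLpNorm f p μ).toReal * (eLpNorm g q μ).toReal := by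
  have h : eLpNorm (f • g) r μ ≤ eLpNorm f p μ * eLpNorm g q μ :=
    eLpNorm_smul_le_mul_eLpNorm hg.1 hf.1
  rw [← ENNReal.toReal_mul]
  exact ENNReal.toReal_mono (ENNReal.mul_ne_top hf.eLpNorm_ne_top hg.eLpNorm_ne_top) h

theorem integral_abs_mul_mul_le {p q r s : ℝ≥0∞} [ENNReal.HolderTriple q r s]
    [ENNReal.HolderConjugate p s] {f g h : Γ → ℝ}
    (hf : MemLp f p μ) (hg : MemLp g q μ) (hh : MemLp h r μ) :
    ∫ x, |f x * (g x * h x)| ∂μ ≤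
      (eLpNorm f p μ).toReal * (eLpNorm g q μ).toReal * (eLpNorm h r μ).toReal := by
  have hgh : MemLp (g * h) s μ := hh.mul hg
  have hfgh : MemLp (f * (g * h)) 1 μ := hgh.mul hf
  calc ∫ x, |f x * (g x * h x)| ∂μ = (eLpNorm (f * (g * h)) 1 μ).toReal := by
        rw [toReal_eLpNorm hfgh.1, lpNorm_one_eq_integral_norm hfgh.1]
        rfl
    _ ≤ (eLpNorm f p μ).toReal * (eLpNorm (g * h) s μ).toReal := toReal_eLpNorm_mul_le hf hgh
    _ ≤ _ := by
        rw [mul_assoc]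
        gcongr
        exact toReal_eLpNorm_mul_le hg hh

theorem neg_integral_membrane_le {S₀ S₁ cm : ℝ} (hS₀ : 0 ≤ S₀) (hS₁ : 0 ≤ S₁) (hcm : 0 ≤ cm)
    {u₁ u₂ w₁ w₂ : Γ → ℝ} (hu₁ : MemLp u₁ 4 μ) (hu₂ : MemLp u₂ 4 μ) (hw₁ : MemLp w₁ 2 μ)
    (hw₂ : MemLp w₂ 2 μ) (hw₁_nonneg : 0 ≤ᵐ[μ] w₁) :
    -(1 / cm) *
        ∫ x, ((S₀ + S₁ * w₁ x) * u₁ x - (S₀ + S₁ * w₂ x) * u₂ x) * (u₁ x - u₂ x) ∂μ ≤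
      (S₁ / cm) * (eLpNorm (w₁ - w₂) 2 μ).toReal * (eLpNorm u₂ 4 μ).toReal
        * (eLpNorm (u₁ - u₂) 4 μ).toReal := by
  have hdu := hu₁.sub hu₂
  have hdw := hw₁.sub hw₂
  have hprod : MemLp (u₂ * (u₁ - u₂)) 2 μ := hdu.mul hu₂
  have hint : Integrable (fun x => |(w₁ - w₂) x * (u₂ x * (u₁ - u₂) x)|) μ :=
    (memLp_one_iff_integrable.1 (hprod.mul (r := 1) hdw)).abs
  calc -(1 / cm) *
        ∫ x, ((S₀ + S₁ * w₁ x) * u₁ x - (S₀ + S₁ * w₂ x) * u₂ x) * (u₁ x - u₂ x) ∂μ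
      = 1 / cm *
        ∫ x, -(((S₀ + S₁ * w₁ x) * u₁ x - (S₀ + S₁ * w₂ x) * u₂ x) * (u₁ x - u₂ x)) ∂μ := by
        rw [integral_neg]; ring
    _ ≤ 1 / cm * ∫ x, S₁ * |(w₁ - w₂) x * (u₂ x * (u₁ - u₂) x)| ∂μ := by
        refine mul_le_mul_of_nonneg_left ?_ (by positivity)
        exact integral_mono_ae_of_nonneg_right (hint.const_mul S₁)
          (ae_of_all _ fun _ => by positivity)
          (hw₁_nonneg.mono fun _ hx => neg_membrane_sub_mul_sub_le hS₀ hS₁ hx)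
    _ = S₁ / cm * ∫ x, |(w₁ - w₂) x * (u₂ x * (u₁ - u₂) x)| ∂μ := by
        rw [integral_const_mul]; ring
    _ ≤ S₁ / cm * ((eLpNorm (w₁ - w₂) 2 μ).toReal * (eLpNorm u₂ 4 μ).toReal
          * (eLpNorm (u₁ - u₂) 4 μ).toReal) := by
        refine mul_le_mul_of_nonneg_left ?_ (by positivity)
        exact integral_abs_mul_mul_le (s := 2) hdw hu₂ hdu
    _ = _ := by ring

theorem integral_epF_sub_mul_sub_le {τep τres Lβ : ℝ} {β : ℝ → ℝ}
    (hβ : ∀ x y : ℝ, |β x - β y| ≤ Lβ * |x - y|)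
    {u₁ u₂ w₁ w₂ : Γ → ℝ} (hu₁ : MemLp u₁ 2 μ) (hu₂ : MemLp u₂ 2 μ) (hw₁ : MemLp w₁ 2 μ)
    (hw₂ : MemLp w₂ 2 μ) :
    ∫ x, (epF τep τres β (u₁ x) (w₁ x) - epF τep τres β (u₂ x) (w₂ x)) * (w₁ x - w₂ x) ∂μ ≤
      max |τep|⁻¹ |τres|⁻¹ * (Lβ + 1) *
        ((eLpNorm (u₁ - u₂) 2 μ).toReal ^ 2 + (eLpNorm (w₁ - w₂) 2 μ).toReal ^ 2) := by
  have hdu := hu₁.sub hu₂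
  have hdw := hw₁.sub hw₂
  have hC : 0 ≤ max |τep|⁻¹ |τres|⁻¹ * (Lβ + 1) := by
    have := nonneg_of_abs_sub_le_mul_abs_sub hβ
    exact mul_nonneg (le_max_of_le_left (by positivity)) (by linarith)
  calc ∫ x, (epF τep τres β (u₁ x) (w₁ x) - epF τep τres β (u₂ x) (w₂ x)) * (w₁ x - w₂ x) ∂μ
      ≤ ∫ x, max |τep|⁻¹ |τres|⁻¹ * (Lβ + 1) * ((u₁ - u₂) x ^ 2 + (w₁ - w₂) x ^ 2) ∂μ :=
        integral_mono_ae_of_nonneg_right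
          ((hdu.integrable_sq.add hdw.integrable_sq).const_mul _)
          (ae_of_all _ fun _ => by positivity)
          (ae_of_all _ fun x => epF_sub_mul_sub_le hβ _ _ _ _)
    _ = _ := by
        rw [integral_const_mul, integral_add hdu.integrable_sq hdw.integrable_sq,
          integral_sq_eq_sq_toReal_eLpNorm_two hdu.1, integral_sq_eq_sq_toReal_eLpNorm_two hdw.1]

end

theorem reaction_local_monotonicity_general {Γ : Type*} [MeasurableSpace Γ]
    (μ : Measure Γ)
    (S₀ S₁ cm τep τres Lβ : ℝ)
    (hS₀ : 0 < S₀) (hS₁ : 0 < S₁) (hcm : 0 < cm)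
    (β : ℝ → ℝ) (hβ : ∀ x y : ℝ, |β x - β y| ≤ Lβ * |x - y|) :
    ∃ C : ℝ, ∀ u₁ u₂ w₁ w₂ : Γ → ℝ,
      MemLp u₁ 2 μ → MemLp u₁ 4 μ → MemLp u₂ 2 μ → MemLp u₂ 4 μ →
      MemLp w₁ 2 μ → MemLp w₂ 2 μ →
      (∀ᵐ x ∂μ, 0 ≤ w₁ x ∧ w₁ x ≤ 1) →
      -(1 / cm) *
          ∫ x, ((S₀ + S₁ * w₁ x) * u₁ x - (S₀ + S₁ * w₂ x) * u₂ x) * (u₁ x - u₂ x) ∂μ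
        + ∫ x, (epF τep τres β (u₁ x) (w₁ x) - epF τep τres β (u₂ x) (w₂ x))
            * (w₁ x - w₂ x) ∂μ
        ≤ (S₁ / cm) * (eLpNorm (w₁ - w₂) 2 μ).toReal * (eLpNorm u₂ 4 μ).toReal
            * (eLpNorm (u₁ - u₂) 4 μ).toReal
          + C * (((eLpNorm (u₁ - u₂) 2 μ).toReal) ^ 2
              + ((eLpNorm (w₁ - w₂) 2 μ).toReal) ^ 2) := by
  refine ⟨max |τep|⁻¹ |τres|⁻¹ * (Lβ + 1),
    fun u₁ u₂ w₁ w₂ hu₁₂ hu₁₄ hu₂₂ hu₂₄ hw₁ hw₂ hw₁_bounds => ?_⟩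
  exact add_le_add
    (neg_integral_membrane_le hS₀.le hS₁.le hcm.le hu₁₄ hu₂₄ hw₁ hw₂
      (hw₁_bounds.mono fun _ hx => hx.1))
    (integral_epF_sub_mul_sub_le hβ hu₁₂ hu₂₂ hw₁ hw₂)

/-- Generalized local monotonicity of the reaction part
`F(U) = (−S_m(v,w)/c_m, f(v,w))` of the drift in the electroporation
SPDE–ODE system. -/
theorem reaction_local_monotonicity {Γ : Type*} [MeasurableSpace Γ]
    (μ : Measure Γ)
    (S₀ S₁ cm τep τres Lβ : ℝ)
    (hS₀ : 0 < S₀) (hS₁ : 0 < S₁) (hcm : 0 < cm)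
    (hep : 0 < τep) (hres : 0 < τres)
    (β : ℝ → ℝ) (hβ : ∀ x y : ℝ, |β x - β y| ≤ Lβ * |x - y|) :
    ∃ C : ℝ, ∀ u₁ u₂ w₁ w₂ : Γ → ℝ,
      MemLp u₁ 2 μ → MemLp u₁ 4 μ → MemLp u₂ 2 μ → MemLp u₂ 4 μ →
      MemLp w₁ 2 μ → MemLp w₂ 2 μ →
      (∀ᵐ x ∂μ, 0 ≤ w₁ x ∧ w₁ x ≤ 1) →
      -(1 / cm) *
          ∫ x, ((S₀ + S₁ * w₁ x) * u₁ x - (S₀ + S₁ * w₂ x) * u₂ x) * (u₁ x - u₂ x) ∂μ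
        + ∫ x, (epF τep τres β (u₁ x) (w₁ x) - epF τep τres β (u₂ x) (w₂ x))
            * (w₁ x - w₂ x) ∂μ
        ≤ (S₁ / cm) * (eLpNorm (w₁ - w₂) 2 μ).toReal * (eLpNorm u₂ 4 μ).toReal
            * (eLpNorm (u₁ - u₂) 4 μ).toReal
          + C * (((eLpNorm (u₁ - u₂) 2 μ).toReal) ^ 2
              + ((eLpNorm (w₁ - w₂) 2 μ).toReal) ^ 2) :=
  reaction_local_monotonicity_general μ S₀ S₁ cm τep τres Lβ hS₀ hS₁ hcm β hβ
end
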